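/- arXiv:2405.20647 — 3 statements merged into one kernel-verified Lean document; each statement's English description precedes it below -/
import Mathlib

section
/- Let (A,m) be a Noetherian local ring, I an ideal of A, and F = {I_n}_{n≥0} an I-stable filtration. Set R = ⊕_{n≥0} I^n t^n, G_F(A) = ⊕_{n≥0} I_n/I_{n+1}, and L^F(A) = ⊕_{n≥0} A/I_{n+1}, the latter two viewed as graded R-modules. Then Ass_R(G_F(A)) = Ass_R(L^F(A)). -/
open IsLocalRing Filter Polynomial

noncomputable section
set_option synthInstance.maxHeartbeats 1000000
set_option maxHeartbeats 2000000
set_option linter.unusedVariables false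

/-- An `I`-stable filtration of ideals: `I₀ = A`, decreasing, `I ⊆ I₁ ≠ A`,
`Iₙ·Iₘ ⊆ Iₙ₊ₘ`, and `I·Iₙ = Iₙ₊₁` for all large `n`. -/
structure IStableFiltration {A : Type} [CommRing A] (I : Ideal A) where
  N : ℕ → Ideal A
  N_zero : N 0 = ⊤
  antitone : ∀ n, N (n + 1) ≤ N n
  le_one : I ≤ N 1
  one_ne_top : N 1 ≠ ⊤
  mul_le : ∀ m n, N m * N n ≤ N (m + n)
  stable : ∃ n₀, ∀ n ≥ n₀, I * N n = N (n + 1)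

theorem IStableFiltration.pow_le {A : Type} [CommRing A] {I : Ideal A}
    (F : IStableFiltration I) : ∀ i, I ^ i ≤ F.N i := by
  intro i
  induction i with
  | zero => simp [F.N_zero]
  | succ k ih =>
      rw [pow_succ]
      calc I ^ k * I ≤ F.N k * F.N 1 := Ideal.mul_mono ih F.le_one
        _ ≤ F.N (k + 1) := F.mul_le k 1

/-- The Rees module `R(F) = ⊕ₙ Iₙtⁿ` of a filtration, as a module over the
Rees algebra of `I`: polynomials whose `n`-th coefficient lies in `Iₙ`. -/
def filtRees {A : Type} [CommRing A] {I : Ideal A} (F : IStableFiltration I) :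
    Submodule (reesAlgebra I) (Polynomial A) where
  carrier := {f | ∀ n, f.coeff n ∈ F.N n}
  add_mem' := by
    intro a b ha hb n
    rw [Polynomial.coeff_add]
    exact add_mem (ha n) (hb n)
  zero_mem' := by intro n; simp
  smul_mem' := by
    intro r f hf n
    have hr : ∀ i, (r : Polynomial A).coeff i ∈ I ^ i :=
      (mem_reesAlgebra_iff I (r : Polynomial A)).mp r.2
    have hrf : r • f = (r : Polynomial A) * f := rfl
    show (r • f).coeff n ∈ F.N n
    rw [hrf, Polynomial.coeff_mul]
    apply Submodule.sum_mem
    rintro ⟨i, j⟩ hij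
    have hij' : i + j = n := Finset.HasAntidiagonal.mem_antidiagonal.mp hij
    subst hij'
    exact F.mul_le i j (Ideal.mul_mem_mul (F.pow_le i (hr i)) (hf j))

/-- The shifted Rees module `⊕ₙ Iₙ₊₁tⁿ` (coefficients in `Iₙ₊₁`). -/
def filtReesShift {A : Type} [CommRing A] {I : Ideal A} (F : IStableFiltration I) :
    Submodule (reesAlgebra I) (Polynomial A) where
  carrier := {f | ∀ n, f.coeff n ∈ F.N (n + 1)}
  add_mem' := by
    intro a b ha hb n
    rw [Polynomial.coeff_add]
    exact add_mem (ha n) (hb n)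
  zero_mem' := by intro n; simp
  smul_mem' := by
    intro r f hf n
    have hr : ∀ i, (r : Polynomial A).coeff i ∈ I ^ i :=
      (mem_reesAlgebra_iff I (r : Polynomial A)).mp r.2
    have hrf : r • f = (r : Polynomial A) * f := rfl
    show (r • f).coeff n ∈ F.N (n + 1)
    rw [hrf, Polynomial.coeff_mul]
    apply Submodule.sum_mem
    rintro ⟨i, j⟩ hij
    have hij' : i + j = n := Finset.HasAntidiagonal.mem_antidiagonal.mp hij
    have h2 : i + (j + 1) = n + 1 := by omega
    exact h2 ▸ F.mul_le i (j + 1) (Ideal.mul_mem_mul (F.pow_le i (hr i)) (hf j))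

/-- `L^F(A) = ⊕ₙ A/Iₙ₊₁` as a module over the Rees algebra `R = R(I)`, arising from the
exact sequence `0 → R(F) → A[t] → L^F(A)(−1) → 0`. -/
abbrev filtL {A : Type} [CommRing A] {I : Ideal A} (F : IStableFiltration I) :=
  Polynomial A ⧸ filtRees F

/-- `G_F(A) = ⊕ₙ Iₙ/Iₙ₊₁` as a module over the Rees algebra `R = R(I)`:
the image of `R(F)` in `A[t]/(⊕ₙ Iₙ₊₁tⁿ)`. -/
noncomputable abbrev filtG {A : Type} [CommRing A] {I : Ideal A} (F : IStableFiltration I) :=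
  Submodule.map (filtReesShift F).mkQ (filtRees F)

/-!
Multiplication by `t` identifies `L^F(A)` with `M = A[t] / ⊕ₙ Iₙ₊₁tⁿ`, and `G_F(A) ⊆ M` is the
kernel of the endomorphism `ψ` of `M` induced by dividing by `t`, which is locally nilpotent.
For such a `ψ`, an associated prime `p = ann x` of `M` is associated to `ker ψ`: follow
`x, ψ x, ψ² x, …` as long as the annihilator stays `p` (it can only grow, and it is everything
at the end); at the last such `ψʲ x`, some `a ∉ p` kills `ψʲ⁺¹ x`, and since `p` is prime
`a • ψʲ x ∈ ker ψ` still has annihilator `p`.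
-/

section LocallyNilpotent

variable {R M : Type*} [CommSemiring R] [AddCommMonoid M] [Module R M]

theorem exists_mem_ker_colon_eq_of_pow_apply_eq_zero {p : Ideal R} [p.IsPrime]
    (ψ : Module.End R M) {k : ℕ} {x : M} (hx : p = (⊥ : Submodule R M).colon {x})
    (hk : (ψ ^ k) x = 0) : ∃ z ∈ LinearMap.ker ψ, p = (⊥ : Submodule R M).colon {z} := by
  induction k generalizing x with
  | zero =>
    rw [pow_zero, Module.End.one_apply] at hk
    subst hk
    exact absurd (hx.trans Submodule.colon_singleton_zero) Ideal.IsPrime.ne_top'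
  | succ k ih =>
    have hle : p ≤ (⊥ : Submodule R M).colon {ψ x} := by
      intro r hr
      rw [hx, Submodule.mem_colon_singleton, Submodule.mem_bot] at hr
      rw [Submodule.mem_colon_singleton, Submodule.mem_bot, ← map_smul, hr, map_zero]
    rcases hle.eq_or_lt with heq | hlt
    · exact ih heq (by rwa [pow_succ, Module.End.mul_apply] at hk)
    obtain ⟨a, ha, hap⟩ := SetLike.exists_of_lt hlt
    rw [Submodule.mem_colon_singleton, Submodule.mem_bot] at ha
    refine ⟨a • x, by rwa [LinearMap.mem_ker, map_smul], ?_⟩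
    ext r
    rw [Submodule.mem_colon_singleton, Submodule.mem_bot, smul_smul, ← Submodule.mem_bot R,
      ← Submodule.mem_colon_singleton, ← hx]
    exact ⟨fun hr => p.mul_mem_right a hr,
      fun hr => (Ideal.IsPrime.mem_or_mem ‹_› hr).resolve_right hap⟩

theorem associatedPrimes_subset_ker [IsNoetherianRing R] (ψ : Module.End R M)
    (hψ : ∀ x, ∃ k, (ψ ^ k) x = 0) :
    associatedPrimes R M ⊆ associatedPrimes R (LinearMap.ker ψ) := by
  intro p hp
  obtain ⟨hprime, x, hx⟩ := isAssociatedPrime_iff.mp hp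
  obtain ⟨k, hk⟩ := hψ x
  obtain ⟨z, hz, hpz⟩ := exists_mem_ker_colon_eq_of_pow_apply_eq_zero ψ hx hk
  refine isAssociatedPrime_iff.mpr ⟨hprime, ⟨z, hz⟩, ?_⟩
  ext r
  simp [hpz, Submodule.mem_colon_singleton]

theorem associatedPrimes_eq_of_ker_le [IsNoetherianRing R] {N : Submodule R M}
    (ψ : Module.End R M) (hker : LinearMap.ker ψ ≤ N) (hψ : ∀ x, ∃ k, (ψ ^ k) x = 0) :
    associatedPrimes R N = associatedPrimes R M :=
  (associatedPrimes.subset_of_injective N.injective_subtype).antisymm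
    ((associatedPrimes_subset_ker ψ hψ).trans
      (associatedPrimes.subset_of_injective (Submodule.inclusion_injective hker)))

end LocallyNilpotent

namespace IStableFiltration

variable {A : Type} [CommRing A] {I : Ideal A} (F : IStableFiltration I)

theorem filtReesShift_le_filtRees : filtReesShift F ≤ filtRees F :=
  fun _ hf n => F.antitone n (hf n)

theorem C_mem_filtRees (c : A) : C c ∈ filtRees F
  | 0 => by simp [F.N_zero]
  | n + 1 => by simp

theorem comap_mulLeft_X_filtRees :
    (filtRees F).comap (LinearMap.mulLeft (reesAlgebra I) X) = filtReesShift F := by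
  ext f
  refine ⟨fun hf n => ?_, fun hf => ?_⟩
  · simpa only [LinearMap.mulLeft_apply, coeff_X_mul] using hf (n + 1)
  · rintro (_ | n)
    · simp
    · simpa only [LinearMap.mulLeft_apply, coeff_X_mul] using hf n

def mulXQuot : (A[X] ⧸ filtReesShift F) →ₗ[reesAlgebra I] filtL F :=
  (filtReesShift F).mapQ (filtRees F) (LinearMap.mulLeft _ X) F.comap_mulLeft_X_filtRees.ge

theorem mulXQuot_mk_divX (f : A[X]) :
    F.mulXQuot (Submodule.Quotient.mk f.divX) = Submodule.Quotient.mk f := by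
  rw [mulXQuot, Submodule.mapQ_apply, LinearMap.mulLeft_apply, Submodule.Quotient.eq]
  have : X * f.divX - f = -C (f.coeff 0) := by linear_combination X_mul_divX_add f
  rw [this]
  exact neg_mem (F.C_mem_filtRees _)

theorem mulXQuot_bijective : Function.Bijective F.mulXQuot := by
  refine ⟨?_, fun y => ?_⟩
  · rw [← LinearMap.ker_eq_bot, mulXQuot, Submodule.ker_mapQ, F.comap_mulLeft_X_filtRees,
      Submodule.mkQ_map_self]
  · obtain ⟨f, rfl⟩ := Submodule.Quotient.mk_surjective _ y
    exact ⟨_, F.mulXQuot_mk_divX f⟩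

def quotShiftEquivFiltL : (A[X] ⧸ filtReesShift F) ≃ₗ[reesAlgebra I] filtL F :=
  LinearEquiv.ofBijective F.mulXQuot F.mulXQuot_bijective

/-- The map induced by `divX` (see `quotDivX_mk`). `divX` is not `reesAlgebra I`-linear on `A[t]`,
only modulo `⊕ₙ Iₙ₊₁tⁿ`, so the map is built as the projection onto `L^F(A)` followed by the
inverse of `quotShiftEquivFiltL`. -/
def quotDivX : Module.End (reesAlgebra I) (A[X] ⧸ filtReesShift F) :=
  F.quotShiftEquivFiltL.symm.toLinearMap ∘ₗ
    (filtReesShift F).mapQ (filtRees F) LinearMap.id F.filtReesShift_le_filtRees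

theorem quotDivX_mk (f : A[X]) :
    F.quotDivX (Submodule.Quotient.mk f) = Submodule.Quotient.mk f.divX := by
  rw [quotDivX, LinearMap.comp_apply, LinearEquiv.coe_coe, LinearEquiv.symm_apply_eq,
    quotShiftEquivFiltL, LinearEquiv.ofBijective_apply, mulXQuot_mk_divX, Submodule.mapQ_apply,
    LinearMap.id_apply]

theorem ker_quotDivX : LinearMap.ker F.quotDivX = filtG F := by
  rw [quotDivX, LinearEquiv.ker_comp, Submodule.ker_mapQ, Submodule.comap_id]

theorem quotDivX_pow_mk_eq_zero (n : ℕ) (f : A[X]) (hf : ∀ i ≥ n, f.coeff i = 0) :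
    (F.quotDivX ^ n) (Submodule.Quotient.mk f) = 0 := by
  induction n generalizing f with
  | zero =>
    rw [show f = 0 from Polynomial.ext fun i => hf i i.zero_le]
    rfl
  | succ n ih =>
    rw [pow_succ, Module.End.mul_apply, quotDivX_mk]
    exact ih _ fun i hi => by rw [coeff_divX]; exact hf (i + 1) (by omega)

theorem exists_quotDivX_pow_eq_zero (z : A[X] ⧸ filtReesShift F) :
    ∃ k, (F.quotDivX ^ k) z = 0 := by
  obtain ⟨f, rfl⟩ := Submodule.Quotient.mk_surjective _ z
  exact ⟨_, F.quotDivX_pow_mk_eq_zero (f.natDegree + 1) f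
    fun i hi => coeff_eq_zero_of_natDegree_lt (by omega)⟩

end IStableFiltration

theorem stmt2_general (A : Type) [CommRing A] [IsNoetherianRing A]
    (I : Ideal A) (F : IStableFiltration I) :
    associatedPrimes (reesAlgebra I) (filtG F) = associatedPrimes (reesAlgebra I) (filtL F) := by
  rw [← LinearEquiv.AssociatedPrimes.eq F.quotShiftEquivFiltL]
  exact associatedPrimes_eq_of_ker_le F.quotDivX F.ker_quotDivX.le F.exists_quotDivX_pow_eq_zero

/-- `Ass_R(G_F(A)) = Ass_R(L^F(A))` for an `I`-stable filtration `F`, where `R` is the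
Rees algebra of `I`. -/
theorem stmt2 (A : Type) [CommRing A] [IsLocalRing A] [IsNoetherianRing A]
    (I : Ideal A) (F : IStableFiltration I) :
    associatedPrimes (reesAlgebra I) (filtG F) = associatedPrimes (reesAlgebra I) (filtL F) :=
  stmt2_general A I F

end
end

section
/- Let (A,m) be a Noetherian local ring of dimension d ≥ 1 with depth(A) > 0, and let I be a regular ideal of A (an ideal containing a nonzerodivisor). Let M be a finitely generated A-module with ann(M) = 0 such that M_p is a free A_p-module for every prime p ≠ m. If there exists l ≥ 1 such that r(I^n, M) = Ĩ^n for all n ≥ l, then r(I^n, M) = Ĩ^n for all n ≥ 1. -/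
open IsLocalRing Filter Polynomial

noncomputable section
set_option synthInstance.maxHeartbeats 1000000
set_option maxHeartbeats 2000000
set_option linter.unusedVariables false

/-- `A` is analytically unramified: its `m`-adic completion is reduced. -/
def AnalyticallyUnramified (A : Type) [CommRing A] [IsLocalRing A] : Prop :=
  IsReduced (AdicCompletion (maximalIdeal A) A)

/-- `depth A > 0`: the maximal ideal contains a nonzerodivisor. -/
def PosDepth (A : Type) [CommRing A] [IsLocalRing A] : Prop :=
  ∃ x ∈ maximalIdeal A, x ∈ nonZeroDivisors A

/-- `M` is free on the punctured spectrum: `M_p` is a free `A_p`-module for every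
prime `p ≠ m`. -/
def FreeOnPunctured (A : Type) [CommRing A] [IsLocalRing A]
    (M : Type) [AddCommGroup M] [Module A M] : Prop :=
  ∀ (P : Ideal A) (hP : P.IsPrime), P ≠ maximalIdeal A →
    Module.Free (Localization.AtPrime P) (LocalizedModule P.primeCompl M)

/-- `M` has rank one: `M_p ≅ A_p` for every minimal prime `p` of `A`. -/
def RankOne (A : Type) [CommRing A] (M : Type) [AddCommGroup M] [Module A M] : Prop :=
  ∀ (P : Ideal A) (hP : P.IsPrime), P ∈ minimalPrimes A →
    Nonempty ((LocalizedModule P.primeCompl M) ≃ₗ[Localization.AtPrime P] Localization.AtPrime P)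

/-- `r(I,M)`: the stable value of the ascending chain of ideals `(I^(n+1)M : I^n M)`. -/
noncomputable def rIM {A : Type} [CommRing A] (I : Ideal A) (M : Type)
    [AddCommGroup M] [Module A M] : Ideal A :=
  ⨆ n : ℕ, Submodule.colon (I ^ (n + 1) • (⊤ : Submodule A M)) (I ^ n • (⊤ : Submodule A M) : Submodule A M)

/-- The Ratliff–Rush closure `J̃` of an ideal `J`: the stable value of the ascending chain
`(J^(n+1) : J^n)`. -/
noncomputable def Ideal.ratliffRush {A : Type} [CommRing A] (J : Ideal A) : Ideal A :=
  ⨆ n : ℕ, Submodule.colon (J ^ (n + 1) : Ideal A) (J ^ n : Ideal A)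


/- For `n ≤ l`, an `x` with `x Iᵏ M ⊆ Iⁿ⁺ᵏ M` satisfies `y x ∈ r(Iˡ, M) = (Iˡ)~` for every
`y ∈ Iˡ⁻ⁿ`. As `A` is Noetherian, the chain defining `(Iˡ)~` stabilises, so `(Iˡ)~ = (Iˡ⁺ʲ : Iʲ)`
for a single `j`; hence `x Iˡ⁻ⁿ⁺ʲ ⊆ Iˡ⁺ʲ` and `x ∈ (Iⁿ)~`. The inclusion `J~ ⊆ r(J, M)` holds for
every ideal and module. -/

open Pointwise

section

variable {A : Type} [CommRing A] {M : Type} [AddCommGroup M] [Module A M]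

def rIMChain (I : Ideal A) (M : Type) [AddCommGroup M] [Module A M] (n k : ℕ) : Ideal A :=
  (I ^ (n + k) • (⊤ : Submodule A M)).colon (I ^ k • (⊤ : Submodule A M) : Submodule A M)

theorem mem_rIMChain_add_iff {I : Ideal A} {n m k : ℕ} {x : A} :
    x ∈ rIMChain I M n (m + k) ↔ ∀ y ∈ I ^ m, y * x ∈ rIMChain I M (m + n) k := by
  have hexp : n + (m + k) = m + n + k := by omega
  simp only [rIMChain, Submodule.mem_colon, SetLike.mem_coe, hexp, pow_add I m k, mul_smul]
  constructor
  · intro hx y hy p hp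
    rw [smul_comm]
    exact hx _ (Submodule.smul_mem_smul hy hp)
  · intro hx p hp
    refine Submodule.smul_induction_on hp (fun y hy q hq ↦ ?_) fun p q hp hq ↦ ?_
    · rw [smul_comm]; exact hx y hy q hq
    · rw [smul_add]; exact add_mem hp hq

theorem mul_mem_rIMChain {I : Ideal A} {n m k : ℕ} {x y : A} (hx : x ∈ rIMChain I M n k)
    (hy : y ∈ I ^ m) : y * x ∈ rIMChain I M (m + n) k := by
  simp only [rIMChain, Submodule.mem_colon, SetLike.mem_coe, add_assoc, pow_add I m, mul_smul]
    at hx ⊢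
  exact fun p hp ↦ Submodule.smul_mem_smul hy (hx p hp)

theorem rIMChain_mono (I : Ideal A) (n : ℕ) : Monotone (rIMChain I M n) :=
  monotone_nat_of_le_succ fun _ _ hx ↦ by
    rw [add_comm, mem_rIMChain_add_iff]
    exact fun _ hy ↦ mul_mem_rIMChain hx hy

theorem rIM_pow_eq_iSup_rIMChain (I : Ideal A) {n : ℕ} (hn : 0 < n) :
    rIM (I ^ n) M = ⨆ k, rIMChain I M n k := by
  have hpow : rIM (I ^ n) M = ⨆ j, rIMChain I M n (n * j) := by
    simp only [rIM, rIMChain, ← pow_mul, mul_add_one, add_comm]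
  rw [hpow]
  exact le_antisymm (iSup_mono' fun j ↦ ⟨n * j, le_rfl⟩)
    (iSup_mono' fun k ↦ ⟨k, rIMChain_mono I n (Nat.le_mul_of_pos_left k hn)⟩)

theorem mem_rIM_pow_iff {I : Ideal A} {n : ℕ} (hn : 0 < n) {x : A} :
    x ∈ rIM (I ^ n) M ↔ ∃ k, x ∈ rIMChain I M n k := by
  rw [rIM_pow_eq_iSup_rIMChain I hn,
    Submodule.mem_iSup_of_directed _ (rIMChain_mono I n).directed_le]

theorem mul_mem_rIM_pow {I : Ideal A} {n m : ℕ} (hn : 0 < n) {x y : A} (hx : x ∈ rIM (I ^ n) M)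
    (hy : y ∈ I ^ m) : y * x ∈ rIM (I ^ (m + n)) M := by
  obtain ⟨k, hk⟩ := (mem_rIM_pow_iff hn).1 hx
  exact (mem_rIM_pow_iff (Nat.add_pos_right m hn)).2 ⟨k, mul_mem_rIMChain hk hy⟩

theorem Ideal.ratliffRush_eq_rIM (J : Ideal A) : J.ratliffRush = rIM J A := by
  simp only [Ideal.ratliffRush, rIM, Ideal.smul_eq_mul, Ideal.mul_top]

theorem Ideal.ratliffRush_le_rIM (J : Ideal A) : J.ratliffRush ≤ rIM J M := by
  refine iSup_mono fun k x hx ↦ ?_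
  rw [Submodule.mem_colon] at hx ⊢
  intro p hp
  refine Submodule.smul_induction_on hp (fun a ha q _ ↦ ?_) fun p q hp hq ↦ ?_
  · rw [← mul_smul]
    exact Submodule.smul_mem_smul (hx a ha) Submodule.mem_top
  · rw [smul_add]; exact add_mem hp hq

theorem exists_rIM_pow_eq_rIMChain [IsNoetherianRing A] (I : Ideal A) {n : ℕ} (hn : 0 < n) :
    ∃ k, rIM (I ^ n) M = rIMChain I M n k :=
  ⟨_, (rIM_pow_eq_iSup_rIMChain I hn).trans
    (WellFoundedGT.iSup_eq_monotonicSequenceLimit ⟨_, rIMChain_mono I n⟩)⟩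

theorem mem_rIM_pow_of_forall_mul_mem [IsNoetherianRing A] {I : Ideal A} {n m : ℕ} (hn : 0 < n)
    {x : A} (h : ∀ y ∈ I ^ m, y * x ∈ rIM (I ^ (m + n)) M) : x ∈ rIM (I ^ n) M := by
  obtain ⟨k, hk⟩ := exists_rIM_pow_eq_rIMChain (M := M) I (Nat.add_pos_right m hn)
  rw [hk] at h
  exact (mem_rIM_pow_iff hn).2 ⟨m + k, mem_rIMChain_add_iff.2 h⟩

end

theorem stmt5_general (A : Type) [CommRing A] [IsNoetherianRing A] (I : Ideal A)
    (M : Type) [AddCommGroup M] [Module A M]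
    (l : ℕ) (h : ∀ n : ℕ, n ≥ l → rIM (I ^ n) M = (I ^ n).ratliffRush) :
    ∀ n : ℕ, 1 ≤ n → rIM (I ^ n) M = (I ^ n).ratliffRush := by
  intro n hn
  rcases le_or_gt l n with hln | hnl
  · exact h n hln
  obtain ⟨m, rfl⟩ := Nat.exists_eq_add_of_le' hnl.le
  refine le_antisymm (fun x hx ↦ ?_) (Ideal.ratliffRush_le_rIM _)
  rw [Ideal.ratliffRush_eq_rIM]
  refine mem_rIM_pow_of_forall_mul_mem (m := m) hn fun y hy ↦ ?_
  rw [← Ideal.ratliffRush_eq_rIM, ← h _ le_rfl]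
  exact mul_mem_rIM_pow hn hx hy

/-- If `r(Iⁿ,M) = Ĩⁿ` for all `n ≥ l`, then `r(Iⁿ,M) = Ĩⁿ` for all `n ≥ 1`. -/
theorem stmt5 (A : Type) [CommRing A] [IsLocalRing A] [IsNoetherianRing A]
    (d : ℕ) (hd : 1 ≤ d) (hdim : ringKrullDim A = (d : WithBot ℕ∞))
    (hdepth : PosDepth A)
    (I : Ideal A) (hreg : ∃ x ∈ I, x ∈ nonZeroDivisors A)
    (M : Type) [AddCommGroup M] [Module A M] [Module.Finite A M]
    (hann : Module.annihilator A M = ⊥)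
    (hfree : FreeOnPunctured A M)
    (l : ℕ) (hl : 1 ≤ l) (h : ∀ n : ℕ, n ≥ l → rIM (I ^ n) M = (I ^ n).ratliffRush) :
    ∀ n : ℕ, 1 ≤ n → rIM (I ^ n) M = (I ^ n).ratliffRush :=
  stmt5_general A I M l h
end
end

section
/- Let (A,m) be a Noetherian local ring of dimension d ≥ 1 and I an m-primary ideal of A. If G_I(A) is unmixed and equidimensional, then grade(I, A) > 0, i.e. I contains a nonzerodivisor of A. -/
open IsLocalRing Filter Polynomial

noncomputable section
set_option synthInstance.maxHeartbeats 1000000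
set_option maxHeartbeats 2000000
set_option linter.unusedVariables false

/-- The associated graded ring `G_I(A) = ⊕ₙ Iⁿ/Iⁿ⁺¹` of `A` with respect to `I`,
realized as the quotient `R(I)/I·R(I)` of the Rees algebra. -/
abbrev assocGraded {A : Type} [CommRing A] (I : Ideal A) :=
  (reesAlgebra I) ⧸ (Ideal.map (algebraMap A (reesAlgebra I)) I)

/-- The fiber cone `R(I)/m·R(I) = ⊕ₙ Iⁿ/m·Iⁿ`. -/
abbrev fiberCone (A : Type) [CommRing A] [IsLocalRing A] (I : Ideal A) :=
  (reesAlgebra I) ⧸ (Ideal.map (algebraMap A (reesAlgebra I)) (maximalIdeal A))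

/-- The analytic spread `ℓ(I)`: the Krull dimension of the fiber cone. -/
noncomputable def analyticSpread (A : Type) [CommRing A] [IsLocalRing A] (I : Ideal A) :
    WithBot ℕ∞ :=
  ringKrullDim (fiberCone A I)

/-- A ring `G` is unmixed and equidimensional (of dimension `d`) if `dim G/P = d`
for every associated prime `P` of `G` (as a module over itself). -/
def UnmixedEquidim (G : Type*) [CommRing G] (d : ℕ) : Prop :=
  ∀ P ∈ associatedPrimes G G, ringKrullDim (G ⧸ P) = (d : WithBot ℕ∞)


/-! If `I` consisted of zerodivisors, prime avoidance would put `I`, hence its radical `m`, inside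
an associated prime of `A`, so `m = ann y` for some `y ≠ 0`. By Krull's intersection theorem
`y ∈ Iᵏ \ Iᵏ⁺¹` for some `k`, and its initial form `y tᵏ ∈ G_I(A)` is a nonzero element killed by the
maximal homogeneous ideal `m G_I(A) + G_I(A)₊`. That maximal ideal is then associated to `G_I(A)`,
but its quotient has dimension `0 < d`. -/

theorem Ideal.exists_mem_associatedPrimes_le_of_disjoint_nonZeroDivisors {R : Type*} [CommRing R]
    [IsNoetherianRing R] {I : Ideal R} (h : Disjoint (I : Set R) (nonZeroDivisors R)) :
    ∃ P ∈ associatedPrimes R R, I ≤ P :=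
  (I.subset_union_prime_finite (associatedPrimes.finite R R) (f := id) 0 0
    fun _ hP _ _ ↦ hP.isPrime).mp <|
    biUnion_associatedPrimes_eq_compl_nonZeroDivisors R ▸ h.subset_compl_right

theorem IsLocalRing.maximalIdeal_mem_associatedPrimes_of_disjoint_nonZeroDivisors {A : Type*}
    [CommRing A] [IsLocalRing A] [IsNoetherianRing A] {I : Ideal A}
    (hI : maximalIdeal A ≤ I.radical) (h : Disjoint (I : Set A) (nonZeroDivisors A)) :
    maximalIdeal A ∈ associatedPrimes A A := by
  obtain ⟨P, hP, hIP⟩ := Ideal.exists_mem_associatedPrimes_le_of_disjoint_nonZeroDivisors h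
  have hPm : P = maximalIdeal A :=
    le_antisymm (le_maximalIdeal hP.isPrime.ne_top) (hI.trans (hP.isPrime.radical_le_iff.mpr hIP))
  exact hPm ▸ hP

theorem UnmixedEquidim.not_isMaximal {G : Type*} [CommRing G] {d : ℕ} (h : UnmixedEquidim G d)
    (hd : 0 < d) {P : Ideal G} (hP : P ∈ associatedPrimes G G) : ¬P.IsMaximal := fun hPmax ↦ by
  have hdimP := h P hP
  rw [ringKrullDim_eq_zero_of_isField ((Ideal.Quotient.maximal_ideal_iff_isField_quotient P).mp
    hPmax)] at hdimP
  exact hd.ne' (by exact_mod_cast hdimP.symm)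

theorem Ideal.exists_mem_pow_notMem_pow_succ_of_ne_zero {A : Type*} [CommRing A] [IsLocalRing A]
    [IsNoetherianRing A] {I : Ideal A} (hI : I ≠ ⊤) {y : A} (hy : y ≠ 0) :
    ∃ k, y ∈ I ^ k ∧ y ∉ I ^ (k + 1) := by
  by_contra! h
  have hmem : ∀ n, y ∈ I ^ n := fun n ↦ n.rec (by simp) fun k hk ↦ h k hk
  have hbot : y ∈ ⨅ n, I ^ n := Submodule.mem_iInf _ |>.mpr hmem
  rw [Ideal.iInf_pow_eq_bot_of_isLocalRing I hI, Ideal.mem_bot] at hbot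
  exact hy hbot

theorem reesAlgebra.coeff_mem_pow_succ_of_mem_map {A : Type*} [CommRing A] {I : Ideal A}
    {f : reesAlgebra I} (hf : f ∈ I.map (algebraMap A (reesAlgebra I))) (n : ℕ) :
    (f : A[X]).coeff n ∈ I ^ (n + 1) := by
  rw [← Submodule.restrictScalars_mem A, ← Ideal.smul_top_eq_map] at hf
  refine Submodule.smul_induction_on hf (fun a ha g _ ↦ ?_) fun f g hf hg ↦ ?_
  · rw [Subalgebra.coe_smul, coeff_smul, smul_eq_mul, pow_succ']
    exact Ideal.mul_mem_mul ha (g.2 n)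
  · rw [Subalgebra.coe_add, coeff_add]
    exact add_mem hf hg

namespace assocGraded

section CommRing

variable {A : Type} [CommRing A] {I : Ideal A}

/-- The class of `y tᵏ`; it is the initial form of `y` when `y ∉ Iᵏ⁺¹`. -/
def initialForm (k : ℕ) {y : A} (hy : y ∈ I ^ k) : assocGraded I :=
  Ideal.Quotient.mk _ ⟨monomial k y, reesAlgebra.monomial_mem.mpr hy⟩

theorem initialForm_ne_zero {k : ℕ} {y : A} (hy : y ∈ I ^ k) (hy' : y ∉ I ^ (k + 1)) :
    initialForm k hy ≠ 0 := by
  intro h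
  have := reesAlgebra.coeff_mem_pow_succ_of_mem_map (Ideal.Quotient.eq_zero_iff_mem.mp h) k
  simp only [coeff_monomial_same] at this
  exact hy' this

end CommRing

variable {A : Type} [CommRing A] [IsLocalRing A] {I : Ideal A}

def toResidueField (hI : I ≤ maximalIdeal A) : assocGraded I →+* ResidueField A :=
  Ideal.Quotient.lift _ ((residue A).comp (constantCoeff.comp (reesAlgebra I).val.toRingHom))
    fun f hf ↦ (residue_eq_zero_iff _).mpr <| hI <| by
      simpa using reesAlgebra.coeff_mem_pow_succ_of_mem_map hf 0

theorem toResidueField_mk_algebraMap (hI : I ≤ maximalIdeal A) (a : A) :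
    toResidueField hI (Ideal.Quotient.mk _ (algebraMap A (reesAlgebra I) a)) = residue A a := by
  rw [toResidueField, Ideal.Quotient.lift_mk]
  simp

theorem toResidueField_surjective (hI : I ≤ maximalIdeal A) :
    Function.Surjective (toResidueField hI) := fun b ↦
  let ⟨a, ha⟩ := residue_surjective b
  ⟨_, (toResidueField_mk_algebraMap hI a).trans ha⟩

theorem isMaximal_ker_toResidueField (hI : I ≤ maximalIdeal A) :
    (RingHom.ker (toResidueField hI)).IsMaximal :=
  RingHom.ker_isMaximal_of_surjective _ (toResidueField_surjective hI)

theorem mul_initialForm_eq_zero (hI : I ≤ maximalIdeal A) {g : assocGraded I}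
    (hg : g ∈ RingHom.ker (toResidueField hI)) {k : ℕ} {y : A} (hy : y ∈ I ^ k)
    (hmy : ∀ a ∈ maximalIdeal A, a * y = 0) : g * initialForm k hy = 0 := by
  obtain ⟨f, rfl⟩ := Ideal.Quotient.mk_surjective g
  have hcoeff : ∀ n, (f : A[X]).coeff n ∈ maximalIdeal A
    | 0 => (residue_eq_zero_iff _).mp hg
    | n + 1 => hI (Ideal.pow_le_self n.succ_ne_zero (f.2 (n + 1)))
  have hfy : (f : A[X]) * C y = 0 := by
    ext n
    rw [coeff_mul_C, coeff_zero]
    exact hmy _ (hcoeff n)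
  have hprod : f * ⟨monomial k y, reesAlgebra.monomial_mem.mpr hy⟩ = 0 := by
    apply Subtype.ext
    change (f : A[X]) * monomial k y = 0
    rw [← C_mul_X_pow_eq_monomial, ← mul_assoc, hfy, zero_mul]
  rw [initialForm, ← map_mul, hprod, map_zero]

theorem exists_isMaximal_mem_associatedPrimes [IsNoetherianRing A] (hI : I ≤ maximalIdeal A)
    (hm : maximalIdeal A ∈ associatedPrimes A A) :
    ∃ P ∈ associatedPrimes (assocGraded I) (assocGraded I), P.IsMaximal := by
  obtain ⟨-, y, hy⟩ := isAssociatedPrime_iff.mp hm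
  have hmy : ∀ a ∈ maximalIdeal A, a * y = 0 := fun a ha ↦ by
    rwa [hy, Submodule.mem_colon_singleton, Submodule.mem_bot] at ha
  have hy0 : y ≠ 0 := by
    rintro rfl
    have h1 : (1 : A) ∈ maximalIdeal A := hy ▸ Submodule.mem_colon_singleton.mpr (by simp)
    exact (maximalIdeal.isMaximal A).ne_top (Ideal.eq_top_of_isUnit_mem _ h1 isUnit_one)
  have hItop : I ≠ ⊤ := ne_top_of_le_ne_top (maximalIdeal.isMaximal A).ne_top hI
  obtain ⟨k, hk, hk'⟩ := Ideal.exists_mem_pow_notMem_pow_succ_of_ne_zero hItop hy0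
  obtain ⟨P, hP, hle⟩ := exists_le_isAssociatedPrime_of_isNoetherianRing (assocGraded I) _
    (initialForm_ne_zero hk hk')
  have hker : RingHom.ker (toResidueField hI) ≤ P := fun g hg ↦
    hle <| Submodule.mem_colon_singleton.mpr <| (Submodule.mem_bot _).mpr <|
      mul_initialForm_eq_zero hI hg hk hmy
  have hPker := (isMaximal_ker_toResidueField hI).eq_of_le hP.isPrime.ne_top hker
  exact ⟨P, hP, hPker ▸ isMaximal_ker_toResidueField hI⟩

end assocGraded

theorem stmt9_general (A : Type) [CommRing A] [IsLocalRing A] [IsNoetherianRing A]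
    (d : ℕ) (hd : 1 ≤ d)
    (I : Ideal A) (hprimary : I.radical = maximalIdeal A)
    (hunmix : UnmixedEquidim (assocGraded I) d) :
    ∃ x ∈ I, x ∈ nonZeroDivisors A := by
  by_contra! h
  have hm := maximalIdeal_mem_associatedPrimes_of_disjoint_nonZeroDivisors hprimary.ge
    (Set.disjoint_left.mpr h)
  obtain ⟨P, hP, hPmax⟩ := assocGraded.exists_isMaximal_mem_associatedPrimes
    (hprimary ▸ I.le_radical) hm
  exact hunmix.not_isMaximal hd hP hPmax

/-- If `I` is `m`-primary and `G_I(A)` is unmixed and equidimensional, then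
`grade(I,A) > 0`, i.e. `I` contains a nonzerodivisor. -/
theorem stmt9 (A : Type) [CommRing A] [IsLocalRing A] [IsNoetherianRing A]
    (d : ℕ) (hd : 1 ≤ d) (hdim : ringKrullDim A = (d : WithBot ℕ∞))
    (I : Ideal A) (hprimary : I.radical = maximalIdeal A)
    (hunmix : UnmixedEquidim (assocGraded I) d) :
    ∃ x ∈ I, x ∈ nonZeroDivisors A :=
  stmt9_general A d hd I hprimary hunmix

end
end
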